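/- arXiv:1606.08341 — 2 statements merged into one kernel-verified Lean document; each statement's English description precedes it below -/
import Mathlib

section
/- Suppose X is not ℙ-almost surely constant and that there exists β₀ > 0 with f(β₀) < 0. Then there exists a unique β_c ∈ (0, β₀) with f(β_c) = 0; moreover f(β) > 0 for all β ∈ [0, β_c) and f(β) < 0 for all β > β_c. -/
open MeasureTheory Real

/-- The Laplace transform `λ_β = 𝔼[e^{-βX}]` of the conductance law. -/
noncomputable def lam {Ω : Type*} [MeasurableSpace Ω] (P : Measure Ω) (X : Ω → ℝ) (β : ℝ) : ℝ :=
  ∫ ω, Real.exp (-β * X ω) ∂P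

/-- The annealed critical point `h_a(β) = log(ℓ-1) + log λ_β`. -/
noncomputable def annealedCP {Ω : Type*} [MeasurableSpace Ω] (P : Measure Ω) (X : Ω → ℝ)
    (ℓ : ℕ) (β : ℝ) : ℝ :=
  Real.log ((ℓ : ℝ) - 1) + Real.log (lam P X β)

/-- The function `f(β) = h_a(β) + β·𝔼[X e^{-βX}]/λ_β  (= h_a(β) - β h_a'(β))`. -/
noncomputable def fDS {Ω : Type*} [MeasurableSpace Ω] (P : Measure Ω) (X : Ω → ℝ)
    (ℓ : ℕ) (β : ℝ) : ℝ :=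
  annealedCP P X ℓ β + β * (∫ ω, X ω * Real.exp (-β * X ω) ∂P) / lam P X β

/-!
With `Y = -X`, `λ_β` is the moment generating function of `Y`, so `log λ_β` is the cumulant
generating function `K` of `Y` and `f(β) = log(ℓ-1) + K(β) - β K'(β)`. Since `K''(β)` is the
variance of `Y` under the tilted law, which is positive when `X` is not a.s. constant, `K'` is
strictly increasing; by the mean value theorem `f` is then strictly decreasing on `[0, ∞)`, and
the intermediate value theorem between `f(0) = log(ℓ-1) > 0` and `f(β₀) < 0` gives `β_c`.
-/

open ProbabilityTheory Set

namespace ProbabilityTheory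

variable {Ω : Type*} [MeasurableSpace Ω] {μ : Measure Ω} {X : Ω → ℝ}

lemma iteratedDeriv_two_cgf_pos [IsProbabilityMeasure μ] {t : ℝ}
    (ht : t ∈ interior (integrableExpSet X μ)) (hX : ¬ ∃ c, ∀ᵐ ω ∂μ, X ω = c) :
    0 < iteratedDeriv 2 (cgf X μ) t := by
  have hexp : Integrable (fun ω ↦ exp (t * X ω)) μ := interior_subset (s := integrableExpSet X μ) ht
  have := isProbabilityMeasure_tilted hexp
  rw [← variance_tilted_mul ht]
  refine (variance_nonneg ..).lt_of_ne fun h ↦ hX ⟨(μ.tilted (t * X ·))[X], ?_⟩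
  exact absolutelyContinuous_tilted hexp
    (ae_eq_integral_of_variance_eq_zero (memLp_tilted_mul ht 2) h.symm)

lemma strictMonoOn_deriv_cgf [IsProbabilityMeasure μ] (hX : ¬ ∃ c, ∀ᵐ ω ∂μ, X ω = c) :
    StrictMonoOn (deriv (cgf X μ)) (interior (integrableExpSet X μ)) := by
  refine strictMonoOn_of_deriv_pos convex_integrableExpSet.interior ?_ fun t ht ↦ ?_
  · exact fun t ht ↦ (analyticOnNhd_cgf.deriv t ht).continuousAt.continuousWithinAt
  · rw [interior_interior] at ht
    simpa [iteratedDeriv_succ] using iteratedDeriv_two_cgf_pos ht hX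

end ProbabilityTheory

lemma strictAntiOn_sub_mul_deriv {g : ℝ → ℝ} (hg : Differentiable ℝ g)
    (hg' : StrictMonoOn (deriv g) (Ici 0)) :
    StrictAntiOn (fun x ↦ g x - x * deriv g x) (Ici 0) := by
  intro a ha b hb hab
  obtain ⟨c, hc, hslope⟩ := exists_deriv_eq_slope g hab hg.continuous.continuousOn
    hg.differentiableOn
  have hcb : deriv g c < deriv g b := hg' (ha.out.trans hc.1.le) hb hc.2
  have hab' : deriv g a ≤ deriv g b := hg'.monotoneOn ha hb hab.le
  have hmvt : g b - g a = deriv g c * (b - a) := by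
    rw [hslope, div_mul_cancel₀ _ (sub_ne_zero.2 hab.ne')]
  dsimp only
  nlinarith [mul_lt_mul_of_pos_right hcb (sub_pos.2 hab), mul_le_mul_of_nonneg_left hab' ha.out]

lemma exists_unique_zero_of_strictAntiOn {f : ℝ → ℝ} {b : ℝ} (hb : 0 < b)
    (hcont : ContinuousOn f (Icc 0 b)) (hanti : StrictAntiOn f (Ici 0))
    (hf0 : 0 < f 0) (hfb : f b < 0) :
    ∃ c ∈ Ioo 0 b, f c = 0 ∧ (∀ c' ∈ Ioo 0 b, f c' = 0 → c' = c) ∧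
      (∀ x ∈ Ico 0 c, 0 < f x) ∧ (∀ x, c < x → f x < 0) := by
  obtain ⟨c, hc, hfc⟩ := intermediate_value_Icc' hb.le hcont ⟨hfb.le, hf0.le⟩
  have hc0 : 0 < c := hc.1.lt_of_ne (by rintro rfl; exact hf0.ne' hfc)
  refine ⟨c, ⟨hc0, hc.2.lt_of_ne (by rintro rfl; exact hfb.ne hfc)⟩, hfc, ?_, ?_, ?_⟩
  · intro c' hc' hfc'
    exact hanti.injOn (mem_Ici.2 hc'.1.le) (mem_Ici.2 hc0.le) (hfc'.trans hfc.symm)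
  · intro x hx
    exact hfc ▸ hanti hx.1 (mem_Ici.2 hc0.le) hx.2
  · intro x hx
    exact hfc ▸ hanti (mem_Ici.2 hc0.le) (mem_Ici.2 (hc0.trans hx).le) hx

section

variable {Ω : Type*} [MeasurableSpace Ω] (P : Measure Ω) (X : Ω → ℝ)

lemma integrableExpSet_neg_eq_univ (hInt : ∀ s : ℝ, Integrable (fun ω ↦ exp (-s * X ω)) P) :
    integrableExpSet (-X) P = univ :=
  eq_univ_of_forall fun s ↦ by simpa [integrableExpSet] using hInt s

lemma lam_eq_mgf_neg (β : ℝ) : lam P X β = mgf (-X) P β := by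
  simp [lam, mgf]

lemma fDS_eq_cgf_neg (hInt : ∀ s : ℝ, Integrable (fun ω ↦ exp (-s * X ω)) P) (ℓ : ℕ) (β : ℝ) :
    fDS P X ℓ β = log ((ℓ : ℝ) - 1) + (cgf (-X) P β - β * deriv (cgf (-X) P) β) := by
  rw [deriv_cgf (by simp [integrableExpSet_neg_eq_univ P X hInt])]
  simp only [fDS, annealedCP, lam_eq_mgf_neg, neg_mul, cgf, Pi.neg_apply, mul_neg, integral_neg]
  ring

end

theorem exists_unique_betac_general {Ω : Type*} [MeasurableSpace Ω] (P : Measure Ω)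
    [IsProbabilityMeasure P] (X : Ω → ℝ)
    (hInt : ∀ s : ℝ, Integrable (fun ω => Real.exp (-s * X ω)) P)
    (ℓ : ℕ) (hℓ : 3 ≤ ℓ)
    (hconst : ¬ ∃ c : ℝ, ∀ᵐ ω ∂P, X ω = c)
    (β₀ : ℝ) (hβ₀ : 0 < β₀) (hfβ₀ : fDS P X ℓ β₀ < 0) :
    ∃ βc ∈ Set.Ioo 0 β₀, fDS P X ℓ βc = 0 ∧
      (∀ β' ∈ Set.Ioo 0 β₀, fDS P X ℓ β' = 0 → β' = βc) ∧
      (∀ β ∈ Set.Ico 0 βc, 0 < fDS P X ℓ β) ∧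
      (∀ β : ℝ, βc < β → fDS P X ℓ β < 0) := by
  have hY := integrableExpSet_neg_eq_univ P X hInt
  have hcgf : ContDiff ℝ 1 (cgf (-X) P) :=
    AnalyticOnNhd.contDiff (by simpa [hY] using analyticOnNhd_cgf (X := -X) (μ := P))
  have hmono : StrictMono (deriv (cgf (-X) P)) := by
    simpa [hY] using strictMonoOn_deriv_cgf (X := -X) fun ⟨c, hc⟩ ↦
      hconst ⟨-c, hc.mono fun ω hω ↦ by simp [← hω]⟩
  simp_rw [fDS_eq_cgf_neg P X hInt] at hfβ₀ ⊢
  have hanti := (strictAntiOn_sub_mul_deriv (hcgf.differentiable one_ne_zero)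
    (hmono.strictMonoOn _)).const_add (log ((ℓ : ℝ) - 1))
  have hf0 : 0 < log ((ℓ : ℝ) - 1) := log_pos <| by
    have : (3 : ℝ) ≤ ℓ := by exact_mod_cast hℓ
    linarith
  refine exists_unique_zero_of_strictAntiOn hβ₀ ?_ hanti (by simpa [cgf_zero] using hf0) hfβ₀
  exact (continuous_const.add (hcgf.continuous.sub
    (continuous_id.mul (hcgf.continuous_deriv le_rfl)))).continuousOn

/-- If `X` is not a.s. constant and `f(β₀) < 0` for some `β₀ > 0`, then there is a unique
`β_c ∈ (0, β₀)` with `f(β_c) = 0`, `f > 0` on `[0, β_c)` and `f < 0` on `(β_c, ∞)`. -/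
theorem exists_unique_betac {Ω : Type*} [MeasurableSpace Ω] (P : Measure Ω)
    [IsProbabilityMeasure P] (X : Ω → ℝ) (hX : Measurable X)
    (hInt : ∀ s : ℝ, Integrable (fun ω => Real.exp (-s * X ω)) P)
    (ℓ : ℕ) (hℓ : 3 ≤ ℓ)
    (hconst : ¬ ∃ c : ℝ, ∀ᵐ ω ∂P, X ω = c)
    (β₀ : ℝ) (hβ₀ : 0 < β₀) (hfβ₀ : fDS P X ℓ β₀ < 0) :
    ∃ βc ∈ Set.Ioo 0 β₀, fDS P X ℓ βc = 0 ∧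
      (∀ β' ∈ Set.Ioo 0 β₀, fDS P X ℓ β' = 0 → β' = βc) ∧
      (∀ β ∈ Set.Ico 0 βc, 0 < fDS P X ℓ β) ∧
      (∀ β : ℝ, βc < β → fDS P X ℓ β < 0) :=
  exists_unique_betac_general P X hInt ℓ hℓ hconst β₀ hβ₀ hfβ₀
end

section
/- Assume in addition λ_{2β} := 𝔼[e^{-2βX}] < ∞ and set r(2) = λ_{2β}/((ℓ−1)λ_β²). Then for every n ≥ 1, 𝔼[Z_n²] = (ℓ−1)/ℓ + ((ℓ−2)/ℓ)·Σ_{k=1}^{n−1} r(2)^k + ((ℓ−1)/ℓ)·r(2)^n, where the three contributions come from pairs of paths sharing no edge, sharing exactly k initial edges (1 ≤ k ≤ n−1), and coinciding, respectively. -/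
/-!
Expanding the square writes `𝔼[Z_n²]` as a sum over pairs of `n`-step paths. By independence a
pair sharing `m` edges contributes `λ_{2β}^m λ_β^{2n-2m} = λ_β^{2n} q^m` with
`q = λ_{2β}/λ_β² = (ℓ-1) r(2)`. Paths with different first letters share no edge; otherwise
they share one edge more than the longest common prefix of their tails, and splitting off the
first letter of the tails gives a linear recursion for `∑ q^m` whose solution is the claimed
closed form.
-/

open MeasureTheory Real ProbabilityTheory

/-- A (nonempty) word indexing an edge of the rooted degree-`ℓ` tree: a first letter in
`Fin ℓ` together with a list of subsequent letters in `Fin (ℓ-1)`.  The `n`-step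
self-avoiding paths from the root correspond to the words of length `n` (list length
`n-1`), and the edges along such a path are the nonempty prefixes of the word. -/
abbrev TreeWord (ℓ : ℕ) : Type := Fin ℓ × List (Fin (ℓ - 1))

/-- The normalized partition function
`Z_n = (ℓ(ℓ-1)^{n-1} λ_β^n)⁻¹ Σ_{|w|=n} exp(-β Σ_{k=1}^n X_{(w_1,…,w_k)})`, with `Z_0 = 1`.
The inner sums run over the first letter `a : Fin ℓ` and the tail `g`, and the `k`-th edge
of the path `w = (a, List.ofFn g)` is the prefix `(a, (List.ofFn g).take (k-1))`. -/
noncomputable def Zpart {Ω : Type*} (ℓ : ℕ) (β lamβ : ℝ)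
    (Xf : TreeWord ℓ → Ω → ℝ) : ℕ → Ω → ℝ
  | 0 => fun _ => 1
  | n + 1 => fun ω =>
      ((ℓ : ℝ) * ((ℓ : ℝ) - 1) ^ n * lamβ ^ (n + 1))⁻¹ *
        ∑ a : Fin ℓ, ∑ g : Fin n → Fin (ℓ - 1),
          Real.exp (-β * ∑ k ∈ Finset.range (n + 1), Xf (a, (List.ofFn g).take k) ω)

open Finset

section Combinatorics

variable {α : Type*}

lemma sum_sum_ite_eq_const [Fintype α] [DecidableEq α] {R : Type*} [CommRing R] (a b : R) :
    ∑ x : α, ∑ y : α, (if x = y then a else b)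
      = Fintype.card α * a + Fintype.card α * (Fintype.card α - 1) * b := by
  have hrow (x : α) : ∑ y : α, (if x = y then a else b) = Fintype.card α * b + (a - b) := by
    have : ∀ y, (if x = y then a else b) = b + if x = y then a - b else 0 := fun y => by
      split_ifs <;> ring
    simp [this, sum_add_distrib]
  simp only [hrow, sum_const, card_univ, nsmul_eq_mul]
  ring

lemma Fintype.sum_fun_fin_succ [Fintype α] {M : Type*} [AddCommMonoid M] {n : ℕ}
    (F : (Fin (n + 1) → α) → M) :
    ∑ g, F g = ∑ x, ∑ h : Fin n → α, F (Fin.cons x h) := by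
  rw [← Fintype.sum_prod_type', ← (Fin.consEquiv fun _ => α).sum_comp]
  rfl

variable [DecidableEq α]

-- The empty prefix is counted too, so for two paths with the same first letter this is the
-- number of edges they share.
def numCommonPrefixes {n : ℕ} (g g' : Fin n → α) : ℕ :=
  #{k ∈ range (n + 1) | (List.ofFn g).take k = (List.ofFn g').take k}

lemma numCommonPrefixes_zero (g g' : Fin 0 → α) : numCommonPrefixes g g' = 1 := by
  simp [numCommonPrefixes]

lemma numCommonPrefixes_cons {n : ℕ} (x x' : α) (h h' : Fin n → α) :
    numCommonPrefixes (Fin.cons x h : Fin (n + 1) → α) (Fin.cons x' h')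
      = if x = x' then numCommonPrefixes h h' + 1 else 1 := by
  unfold numCommonPrefixes
  rw [card_filter, sum_range_succ']
  simp only [List.ofFn_cons, List.take_zero, List.take_succ_cons, List.cons.injEq, if_true]
  split_ifs with hx
  · rw [card_filter]
    simp [hx]
  · simp [hx]

theorem sum_sum_pow_numCommonPrefixes (d n : ℕ) (r : ℝ) :
    ∑ g : Fin n → Fin d, ∑ g' : Fin n → Fin d, ((d : ℝ) * r) ^ numCommonPrefixes g g'
      = (d : ℝ) ^ (2 * n) * (d * r ^ (n + 1) + (d - 1) * ∑ k ∈ range n, r ^ (k + 1)) := by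
  induction n with
  | zero => simp [numCommonPrefixes_zero]
  | succ n ih =>
    have hpair (x x' : Fin d) :
        ∑ h : Fin n → Fin d, ∑ h' : Fin n → Fin d,
            ((d : ℝ) * r) ^
              numCommonPrefixes (Fin.cons x h : Fin (n + 1) → Fin d) (Fin.cons x' h')
          = if x = x' then d * r * ∑ h : Fin n → Fin d, ∑ h' : Fin n → Fin d,
              ((d : ℝ) * r) ^ numCommonPrefixes h h'
            else (d : ℝ) ^ (2 * n) * (d * r) := by
      simp only [numCommonPrefixes_cons]
      split_ifs
      · simp [pow_succ, mul_sum, mul_comm]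
      · simp [pow_mul', pow_two, mul_assoc]
    have hshift : ∑ k ∈ range n, r ^ (k + 1 + 1) = r * ∑ k ∈ range n, r ^ (k + 1) := by
      rw [mul_sum]
      exact sum_congr rfl fun k _ => by ring
    simp only [Fintype.sum_fun_fin_succ]
    rw [sum_congr rfl fun x _ => sum_comm,
      sum_congr rfl fun x _ => sum_congr rfl fun x' _ => hpair x x', sum_sum_ite_eq_const, ih,
      sum_range_succ', hshift, Fintype.card_fin]
    ring

end Combinatorics

section Independence

variable {Ω κ : Type*} [MeasurableSpace Ω] {P : Measure Ω} {X : Ω → ℝ} {Xf : κ → Ω → ℝ}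

lemma ProbabilityTheory.IdentDistrib.integral_exp_neg_mul_eq_lam {Y : Ω → ℝ}
    (h : IdentDistrib Y X P P) (t : ℝ) :
    ∫ ω, exp (-t * Y ω) ∂P = lam P X t :=
  (h.comp (measurable_id.const_mul (-t)).exp).integral_eq

theorem integral_exp_neg_sum_mul_exp_neg_sum [DecidableEq κ] (hindep : iIndepFun Xf P)
    (hident : ∀ i, IdentDistrib (Xf i) X P P) (β : ℝ) (A B : Finset κ) :
    ∫ ω, exp (-β * ∑ i ∈ A, Xf i ω) * exp (-β * ∑ i ∈ B, Xf i ω) ∂P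
      = lam P X (2 * β) ^ #(A ∩ B) * lam P X β ^ #((A ∪ B) \ (A ∩ B)) := by
  -- Shared edges enter the exponent twice.
  set c : κ → ℝ := fun i => if i ∈ A ∩ B then 2 else 1
  set Y : κ → Ω → ℝ := fun i ω => c i * Xf i ω
  have hY : iIndepFun Y P := hindep.comp (fun i x => c i * x) fun i => measurable_const_mul _
  have hpt (ω : Ω) : exp (-β * ∑ i ∈ A, Xf i ω) * exp (-β * ∑ i ∈ B, Xf i ω)
      = exp (-β * (∑ i ∈ A ∪ B, Y i) ω) := by
    have hc (i : κ) : Y i ω = Xf i ω + if i ∈ A ∩ B then Xf i ω else 0 := by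
      simp only [Y, c]; split_ifs <;> ring
    rw [← exp_add, Finset.sum_apply, sum_congr rfl fun i _ => hc i, sum_add_distrib, sum_ite_mem,
      inter_eq_right.mpr inter_subset_union, sum_union_inter]
    ring_nf
  have hfactor (i : κ) : mgf (Y i) P (-β) = if i ∈ A ∩ B then lam P X (2 * β) else lam P X β := by
    rw [mgf, ← (hident i).integral_exp_neg_mul_eq_lam, ← (hident i).integral_exp_neg_mul_eq_lam]
    by_cases h : i ∈ A ∩ B <;> simp only [Y, c, h, ↓reduceIte] <;> ring_nf
  calc _ = mgf (∑ i ∈ A ∪ B, Y i) P (-β) := integral_congr_ae (ae_of_all _ hpt)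
    _ = ∏ i ∈ A ∪ B, mgf (Y i) P (-β) :=
        hY.mgf_sum₀ (fun i => (hident i).aemeasurable_fst.const_mul _) _
    _ = _ := by
        rw [prod_congr rfl fun i _ => hfactor i, prod_ite, prod_const, prod_const,
          filter_mem_eq_inter, inter_eq_right.mpr inter_subset_union, filter_not,
          filter_mem_eq_inter, inter_eq_right.mpr inter_subset_union]

theorem integral_sq_sum_exp_neg_sum [IsProbabilityMeasure P] [DecidableEq κ]
    (hindep : iIndepFun Xf P) (hident : ∀ i, IdentDistrib (Xf i) X P P) {β : ℝ}
    (hInt : Integrable (fun ω => exp (-β * X ω)) P)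
    (hInt2 : Integrable (fun ω => exp (-(2 * β) * X ω)) P)
    {ι : Type*} [Fintype ι] (E : ι → Finset κ) {m : ℕ} (hE : ∀ i, #(E i) = m) :
    ∫ ω, (∑ i, exp (-β * ∑ e ∈ E i, Xf e ω)) ^ 2 ∂P
      = lam P X β ^ (2 * m) * ∑ i, ∑ j, (lam P X (2 * β) / lam P X β ^ 2) ^ #(E i ∩ E j) := by
  have hlam : 0 < lam P X β := mgf_pos hInt
  have hlam2 : 0 < lam P X (2 * β) := mgf_pos hInt2
  have hpair (i j : ι) : ∫ ω, exp (-β * ∑ e ∈ E i, Xf e ω) * exp (-β * ∑ e ∈ E j, Xf e ω) ∂P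
      = lam P X β ^ (2 * m) * (lam P X (2 * β) / lam P X β ^ 2) ^ #(E i ∩ E j) := by
    have hcard : #((E i ∪ E j) \ (E i ∩ E j)) + 2 * #(E i ∩ E j) = 2 * m := by
      have hunion := card_union_add_card_inter (E i) (E j)
      have hsdiff := card_sdiff_add_card_eq_card (inter_subset_union (s := E i) (t := E j))
      rw [hE, hE] at hunion
      omega
    rw [integral_exp_neg_sum_mul_exp_neg_sum hindep hident, ← hcard, pow_add, pow_mul, div_pow]
    field_simp
  have hint (i j : ι) :
      Integrable (fun ω => exp (-β * ∑ e ∈ E i, Xf e ω) * exp (-β * ∑ e ∈ E j, Xf e ω)) P :=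
    Integrable.of_integral_ne_zero (by rw [hpair]; positivity)
  conv_lhs => enter [2, ω]; rw [sq, sum_mul_sum]
  rw [integral_finsetSum _ fun i _ => integrable_finsetSum _ fun j _ => hint i j, mul_sum]
  refine sum_congr rfl fun i _ => ?_
  rw [integral_finsetSum _ fun j _ => hint i j, mul_sum]
  exact sum_congr rfl fun j _ => hpair i j

end Independence

section TreePaths

variable {ℓ N : ℕ}

-- An `(N + 1)`-step path from the root: its first letter and the `N` letters after it.
abbrev TreePath (ℓ N : ℕ) : Type := Fin ℓ × (Fin N → Fin (ℓ - 1))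

def pathEdges (p : TreePath ℓ N) : Finset (TreeWord ℓ) :=
  (range (N + 1)).image fun k => (p.1, (List.ofFn p.2).take k)

lemma length_take_ofFn {α : Type*} (g : Fin N → α) {k : ℕ} (hk : k ≤ N) :
    ((List.ofFn g).take k).length = k := by
  simp [hk]

lemma injOn_pathEdges (p : TreePath ℓ N) :
    Set.InjOn (fun k => ((p.1, (List.ofFn p.2).take k) : TreeWord ℓ)) (range (N + 1)) := by
  intro k hk j hj h
  simp only [coe_range, Set.mem_Iio, Prod.mk.injEq, true_and] at hk hj h
  rw [← length_take_ofFn p.2 (by omega : k ≤ N), h, length_take_ofFn p.2 (by omega)]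

lemma card_pathEdges (p : TreePath ℓ N) : #(pathEdges p) = N + 1 := by
  rw [pathEdges, card_image_of_injOn (injOn_pathEdges p), card_range]

lemma sum_pathEdges {M : Type*} [AddCommMonoid M] (p : TreePath ℓ N) (f : TreeWord ℓ → M) :
    ∑ e ∈ pathEdges p, f e = ∑ k ∈ range (N + 1), f (p.1, (List.ofFn p.2).take k) :=
  sum_image (injOn_pathEdges p)

lemma mk_take_mem_pathEdges_iff {p p' : TreePath ℓ N} {k : ℕ} (hk : k < N + 1) :
    ((p.1, (List.ofFn p.2).take k) : TreeWord ℓ) ∈ pathEdges p'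
      ↔ p'.1 = p.1 ∧ (List.ofFn p'.2).take k = (List.ofFn p.2).take k := by
  simp only [pathEdges, mem_image, mem_range, Prod.mk.injEq]
  constructor
  · rintro ⟨j, hj, h1, h2⟩
    obtain rfl : j = k := by
      rw [← length_take_ofFn p'.2 (by omega : j ≤ N), h2, length_take_ofFn p.2 (by omega)]
    exact ⟨h1, h2⟩
  · rintro ⟨h1, h2⟩
    exact ⟨k, hk, h1, h2⟩

lemma card_pathEdges_inter (p p' : TreePath ℓ N) :
    #(pathEdges p ∩ pathEdges p') = if p.1 = p'.1 then numCommonPrefixes p.2 p'.2 else 0 := by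
  rw [← filter_mem_eq_inter, pathEdges.eq_1 p, filter_image,
    card_image_of_injOn ((injOn_pathEdges p).mono (filter_subset _ _))]
  split_ifs with h
  · refine congrArg card (filter_congr fun k hk => ?_)
    rw [mk_take_mem_pathEdges_iff (mem_range.mp hk)]
    simp [h, eq_comm]
  · rw [card_eq_zero, filter_eq_empty_iff]
    intro k hk hmem
    rw [mk_take_mem_pathEdges_iff (mem_range.mp hk)] at hmem
    exact h hmem.1.symm

theorem sum_sum_pow_card_pathEdges_inter (hℓ : 1 ≤ ℓ) (N : ℕ) (r : ℝ) :
    ∑ p : TreePath ℓ N, ∑ p' : TreePath ℓ N, (((ℓ : ℝ) - 1) * r) ^ #(pathEdges p ∩ pathEdges p')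
      = ℓ * ((ℓ : ℝ) - 1) ^ (2 * N) * ((ℓ - 1) * r ^ (N + 1)
          + (ℓ - 2) * ∑ k ∈ range N, r ^ (k + 1) + (ℓ - 1)) := by
  have hd : ((ℓ - 1 : ℕ) : ℝ) = ℓ - 1 := by rw [Nat.cast_sub hℓ, Nat.cast_one]
  have hfirst (a a' : Fin ℓ) :
      ∑ g : Fin N → Fin (ℓ - 1), ∑ g' : Fin N → Fin (ℓ - 1),
          (((ℓ : ℝ) - 1) * r) ^ (if a = a' then numCommonPrefixes g g' else 0)
        = if a = a' then ∑ g : Fin N → Fin (ℓ - 1), ∑ g' : Fin N → Fin (ℓ - 1),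
            (((ℓ - 1 : ℕ) : ℝ) * r) ^ numCommonPrefixes g g'
          else ((ℓ : ℝ) - 1) ^ (2 * N) := by
    split_ifs
    · simp only [hd]
    · simp [← hd, pow_mul', sq]
  simp only [Fintype.sum_prod_type, card_pathEdges_inter]
  rw [sum_congr rfl fun a _ => sum_comm,
    sum_congr rfl fun a _ => sum_congr rfl fun a' _ => hfirst a a', sum_sum_ite_eq_const,
    sum_sum_pow_numCommonPrefixes, hd, Fintype.card_fin]
  ring

lemma Zpart_succ_eq {Ω : Type*} (β lamβ : ℝ) (Xf : TreeWord ℓ → Ω → ℝ) (N : ℕ) (ω : Ω) :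
    Zpart ℓ β lamβ Xf (N + 1) ω = ((ℓ : ℝ) * ((ℓ : ℝ) - 1) ^ N * lamβ ^ (N + 1))⁻¹ *
      ∑ p : TreePath ℓ N, exp (-β * ∑ e ∈ pathEdges p, Xf e ω) := by
  simp only [Zpart, sum_pathEdges, Fintype.sum_prod_type]

end TreePaths

theorem Zpart_second_moment_general {Ω : Type*} [MeasurableSpace Ω] (P : Measure Ω)
    [IsProbabilityMeasure P] (ℓ : ℕ) (hℓ : 3 ≤ ℓ) (β : ℝ)
    (X : Ω → ℝ)
    (hInt : Integrable (fun ω => Real.exp (-β * X ω)) P)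
    (hInt2 : Integrable (fun ω => Real.exp (-(2 * β) * X ω)) P)
    (Xf : TreeWord ℓ → Ω → ℝ)
    (hindep : iIndepFun Xf P)
    (hident : ∀ w, IdentDistrib (Xf w) X P P)
    (n : ℕ) (hn : 1 ≤ n) :
    ∫ ω, (Zpart ℓ β (lam P X β) Xf n ω) ^ 2 ∂P
      = ((ℓ : ℝ) - 1) / ℓ
        + (((ℓ : ℝ) - 2) / ℓ) *
            ∑ k ∈ Finset.Icc 1 (n - 1), (lam P X (2 * β) / (((ℓ : ℝ) - 1) * lam P X β ^ 2)) ^ k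
        + (((ℓ : ℝ) - 1) / ℓ) * (lam P X (2 * β) / (((ℓ : ℝ) - 1) * lam P X β ^ 2)) ^ n := by
  obtain ⟨N, rfl⟩ : ∃ N, n = N + 1 := ⟨n - 1, by omega⟩
  have hℓ' : (3 : ℝ) ≤ ℓ := by exact_mod_cast hℓ
  have hd : 0 < (ℓ : ℝ) - 1 := by linarith
  have hlam : 0 < lam P X β := mgf_pos hInt
  set r := lam P X (2 * β) / (((ℓ : ℝ) - 1) * lam P X β ^ 2)
  have hq : lam P X (2 * β) / lam P X β ^ 2 = ((ℓ : ℝ) - 1) * r := by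
    simp only [r]; field_simp
  have hIcc : ∑ k ∈ Icc 1 (N + 1 - 1), r ^ k = ∑ k ∈ range N, r ^ (k + 1) := by
    rw [Nat.add_sub_cancel, ← Ico_add_one_right_eq_Icc, sum_Ico_eq_sum_range, Nat.add_sub_cancel]
    simp only [add_comm]
  simp_rw [Zpart_succ_eq, mul_pow]
  rw [integral_const_mul, integral_sq_sum_exp_neg_sum hindep hident hInt hInt2 _ card_pathEdges,
    hq, sum_sum_pow_card_pathEdges_inter (by omega), hIcc]
  field_simp
  ring

/-- Second moment identity: with `r(2) = λ_{2β}/((ℓ-1)λ_β²)`, for every `n ≥ 1`,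
`𝔼[Z_n²] = (ℓ-1)/ℓ + ((ℓ-2)/ℓ)·Σ_{k=1}^{n-1} r(2)^k + ((ℓ-1)/ℓ)·r(2)^n`. -/
theorem Zpart_second_moment {Ω : Type*} [MeasurableSpace Ω] (P : Measure Ω)
    [IsProbabilityMeasure P] (ℓ : ℕ) (hℓ : 3 ≤ ℓ) (β : ℝ) (hβ : 0 < β)
    (X : Ω → ℝ) (hX : Measurable X)
    (hInt : Integrable (fun ω => Real.exp (-β * X ω)) P)
    (hInt2 : Integrable (fun ω => Real.exp (-(2 * β) * X ω)) P)
    (Xf : TreeWord ℓ → Ω → ℝ) (hXf : ∀ w, Measurable (Xf w))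
    (hindep : iIndepFun Xf P)
    (hident : ∀ w, IdentDistrib (Xf w) X P P)
    (n : ℕ) (hn : 1 ≤ n) :
    ∫ ω, (Zpart ℓ β (lam P X β) Xf n ω) ^ 2 ∂P
      = ((ℓ : ℝ) - 1) / ℓ
        + (((ℓ : ℝ) - 2) / ℓ) *
            ∑ k ∈ Finset.Icc 1 (n - 1), (lam P X (2 * β) / (((ℓ : ℝ) - 1) * lam P X β ^ 2)) ^ k
        + (((ℓ : ℝ) - 1) / ℓ) * (lam P X (2 * β) / (((ℓ : ℝ) - 1) * lam P X β ^ 2)) ^ n :=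
  Zpart_second_moment_general P ℓ hℓ β X hInt hInt2 Xf hindep hident n hn
end
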